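/- arXiv:2104.05446 — 6 statements merged into one kernel-verified Lean document; each statement's English description precedes it below -/
import Mathlib

section
/- Consider the stabilized cut DG scheme with piecewise constants and explicit Euler time stepping for the linear advection equation u_t + u_x = 0 with periodic boundary conditions. Suppose the parameters satisfy 0 < α ≤ 1, 0 < γ_M ≤ γ_A, (1+α)γ_A − γ_M ≤ 1 − α, and the Courant number satisfies 0 < λ ≤ α + γ_M/(γ_M + 1). Then the scheme is total variation diminishing: for any states u^n = (u_1^n, …, u_N^n) with N ≥ 3 and any u^{n+1} = (u_1^{n+1}, …, u_N^{n+1}) satisfying the scheme equations, one has ∑_{j=1}^N |u_j^{n+1} − u_{j−1}^{n+1}| ≤ ∑_{j=1}^N |u_j^n − u_{j−1}^n|, where indices are periodic (u_0 := u_N). -/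
private lemma abs2' (A B x y : ℝ) (hA : 0 ≤ A) (hB : 0 ≤ B) :
    |A*x + B*y| ≤ A*|x| + B*|y| := by
  calc |A*x + B*y| ≤ |A*x| + |B*y| := abs_add_le _ _
    _ = A*|x| + B*|y| := by
        rw [abs_mul, abs_mul, abs_of_nonneg hA, abs_of_nonneg hB]

private lemma abs3' (A B C x y z : ℝ) (hA : 0 ≤ A) (hB : 0 ≤ B) (hC : 0 ≤ C) :
    |A*x + B*y + C*z| ≤ A*|x| + B*|y| + C*|z| := by
  calc |A*x + B*y + C*z| ≤ |A*x + B*y| + |C*z| := abs_add_le _ _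
    _ ≤ A*|x| + B*|y| + |C*z| := by linarith [abs2' A B x y hA hB]
    _ = A*|x| + B*|y| + C*|z| := by rw [abs_mul, abs_of_nonneg hC]

set_option maxHeartbeats 1000000 in
/-- TVD property of the stabilized `P⁰` cut DG scheme with explicit Euler time
stepping for `u_t + u_x = 0` with periodic boundary conditions.
`u` is the solution at time level `n`, `v` at time level `n+1`; indices run
from `1` to `N` and index `0` is the periodic copy of index `N`. -/
theorem stmt_0
    (N : ℕ) (hN : 3 ≤ N)
    (α γM γA lam : ℝ)
    (hα0 : 0 < α) (hα1 : α ≤ 1)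
    (hγM : 0 < γM) (hγMA : γM ≤ γA)
    (hA : (1 + α) * γA - γM ≤ 1 - α)
    (hlam0 : 0 < lam) (hlam1 : lam ≤ α + γM / (γM + 1))
    (u v : ℕ → ℝ)
    (hu0 : u 0 = u N) (hv0 : v 0 = v N)
    (h1 : α * v 1 + γM * (v 1 - v 2)
        = α * u 1 + γM * (u 1 - u 2) + lam * (u N - u 1) + lam * γA * (u 2 - u 1))
    (h2 : v 2 + γM * (v 2 - v 1)
        = u 2 + γM * (u 2 - u 1) + lam * (u 1 - u 2) - lam * γA * (u 2 - u 1))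
    (h3 : ∀ j, 3 ≤ j → j ≤ N → v j = u j + lam * (u (j - 1) - u j)) :
    ∑ j ∈ Finset.Icc 1 N, |v j - v (j - 1)| ≤ ∑ j ∈ Finset.Icc 1 N, |u j - u (j - 1)| := by
  have hγ1 : (0:ℝ) < γM + 1 := by linarith
  have hD : (0:ℝ) < α*(1+γM)+γM := by nlinarith
  -- λ(1+γM) ≤ D
  have hA1 : lam * (1+γM) ≤ α*(1+γM)+γM := by
    have key : lam - α ≤ γM/(γM+1) := by linarith
    rw [le_div_iff₀ hγ1] at key
    nlinarith
  -- λ ≤ 1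
  have hαγ : α*γM ≤ 1 - α := by nlinarith
  have hlam_le1 : lam ≤ 1 := by nlinarith
  -- coefficient nonnegativity
  have hb : (0:ℝ) ≤ lam*(γA-γM) := mul_nonneg hlam0.le (by linarith)
  have hA1' : (0:ℝ) ≤ α*(1+γM)+γM - lam*(1+γM) := by linarith
  have hA4' : (0:ℝ) ≤ α*(1+γM)+γM - lam*((1+α)*γA+α) := by
    have h5 : (1+α)*γA + α ≤ 1 + γM := by linarith
    nlinarith
  have hd : (0:ℝ) ≤ lam*(α*γA+α+γM) := mul_nonneg hlam0.le (by nlinarith)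
  have hDl : (0:ℝ) ≤ (α*(1+γM)+γM)*lam := mul_nonneg hD.le hlam0.le
  have hcl : (0:ℝ) ≤ lam*γM := mul_nonneg hlam0.le hγM.le
  have hDl1 : (0:ℝ) ≤ (α*(1+γM)+γM)*(1-lam) := mul_nonneg hD.le (by linarith)
  -- scheme equations at boundary
  have hvN : v N = u N + lam * (u (N-1) - u N) := h3 N hN le_rfl
  have hv3 : v 3 = u 3 + lam * (u 2 - u 3) := by
    have := h3 3 le_rfl hN; norm_num at this; exact this
  -- the three exact identities
  have hDf1 : (α*(1+γM)+γM) * (v 1 - v N)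
      = (α*(1+γM)+γM - lam*(1+γM)) * (u 1 - u N) + (lam*(γA-γM)) * (u 2 - u 1)
        + ((α*(1+γM)+γM)*lam) * (u N - u (N-1)) := by
    linear_combination (1+γM)*h1 + γM*h2 - (α*(1+γM)+γM)*hvN
  have hDf2 : (α*(1+γM)+γM) * (v 2 - v 1)
      = lam * (u 1 - u N) + (α*(1+γM)+γM - lam*((1+α)*γA+α)) * (u 2 - u 1) := by
    linear_combination α*h2 - h1
  have hDf3 : (α*(1+γM)+γM) * (v 3 - v 2)
      = (lam*γM) * (u 1 - u N) + (lam*(α*γA+α+γM)) * (u 2 - u 1)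
        + ((α*(1+γM)+γM)*(1-lam)) * (u 3 - u 2) := by
    linear_combination (α*(1+γM)+γM)*hv3 - γM*h1 - (α+γM)*h2
  -- absolute value bounds on the first three differences
  have habsD : ∀ x : ℝ, (α*(1+γM)+γM) * |x| = |(α*(1+γM)+γM) * x| := by
    intro x; rw [abs_mul, abs_of_nonneg hD.le]
  have hF1 : (α*(1+γM)+γM) * |v 1 - v N|
      ≤ (α*(1+γM)+γM - lam*(1+γM)) * |u 1 - u N| + (lam*(γA-γM)) * |u 2 - u 1|
        + ((α*(1+γM)+γM)*lam) * |u N - u (N-1)| := by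
    rw [habsD, hDf1]; exact abs3' _ _ _ _ _ _ hA1' hb hDl
  have hF2 : (α*(1+γM)+γM) * |v 2 - v 1|
      ≤ lam * |u 1 - u N| + (α*(1+γM)+γM - lam*((1+α)*γA+α)) * |u 2 - u 1| := by
    rw [habsD, hDf2]; exact abs2' _ _ _ _ hlam0.le hA4'
  have hF3 : (α*(1+γM)+γM) * |v 3 - v 2|
      ≤ (lam*γM) * |u 1 - u N| + (lam*(α*γA+α+γM)) * |u 2 - u 1|
        + ((α*(1+γM)+γM)*(1-lam)) * |u 3 - u 2| := by
    rw [habsD, hDf3]; exact abs3' _ _ _ _ _ _ hcl hd hDl1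
  have h123 : |v 1 - v N| + |v 2 - v 1| + |v 3 - v 2|
      ≤ |u 1 - u N| + |u 2 - u 1| + (1-lam) * |u 3 - u 2| + lam * |u N - u (N-1)| := by
    have hmul : (α*(1+γM)+γM) * (|v 1 - v N| + |v 2 - v 1| + |v 3 - v 2|)
        ≤ (α*(1+γM)+γM) * (|u 1 - u N| + |u 2 - u 1| + (1-lam) * |u 3 - u 2|
            + lam * |u N - u (N-1)|) := by
      have e1 : (α*(1+γM)+γM) * (|v 1 - v N| + |v 2 - v 1| + |v 3 - v 2|)
          = (α*(1+γM)+γM) * |v 1 - v N| + (α*(1+γM)+γM) * |v 2 - v 1|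
            + (α*(1+γM)+γM) * |v 3 - v 2| := by ring
      have e2 : (α*(1+γM)+γM) * (|u 1 - u N| + |u 2 - u 1| + (1-lam) * |u 3 - u 2|
            + lam * |u N - u (N-1)|)
          = ((α*(1+γM)+γM - lam*(1+γM)) * |u 1 - u N| + (lam*(γA-γM)) * |u 2 - u 1|
              + ((α*(1+γM)+γM)*lam) * |u N - u (N-1)|)
            + (lam * |u 1 - u N| + (α*(1+γM)+γM - lam*((1+α)*γA+α)) * |u 2 - u 1|)
            + ((lam*γM) * |u 1 - u N| + (lam*(α*γA+α+γM)) * |u 2 - u 1|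
              + ((α*(1+γM)+γM)*(1-lam)) * |u 3 - u 2|) := by ring
      rw [e1, e2]; linarith
    exact le_of_mul_le_mul_left hmul hD
  -- interior bound
  have hFj : ∀ j ∈ Finset.Icc 4 N,
      |v j - v (j-1)| ≤ (1-lam) * |u j - u (j-1)| + lam * |u (j-1) - u (j-1-1)| := by
    intro j hj
    simp only [Finset.mem_Icc] at hj
    rw [h3 j (by omega) hj.2, h3 (j-1) (by omega) (by omega)]
    have e : u j + lam * (u (j-1) - u j) - (u (j-1) + lam * (u (j-1-1) - u (j-1)))
        = (1-lam) * (u j - u (j-1)) + lam * (u (j-1) - u (j-1-1)) := by ring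
    rw [e]; exact abs2' _ _ _ _ (by linarith) hlam0.le
  have hint : ∑ j ∈ Finset.Icc 4 N, |v j - v (j-1)|
      ≤ ∑ j ∈ Finset.Icc 4 N, ((1-lam) * |u j - u (j-1)| + lam * |u (j-1) - u (j-1-1)|) :=
    Finset.sum_le_sum hFj
  have hdist : ∑ j ∈ Finset.Icc 4 N, ((1-lam) * |u j - u (j-1)| + lam * |u (j-1) - u (j-1-1)|)
      = (1-lam) * ∑ j ∈ Finset.Icc 4 N, |u j - u (j-1)|
        + lam * ∑ j ∈ Finset.Icc 4 N, |u (j-1) - u (j-1-1)| := by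
    rw [Finset.sum_add_distrib, Finset.mul_sum, Finset.mul_sum]
  -- reindex
  have hre : ∑ j ∈ Finset.Icc 4 N, |u (j-1) - u (j-1-1)|
      = ∑ j ∈ Finset.Icc 3 (N-1), |u j - u (j-1)| := by
    apply Finset.sum_nbij' (fun j => j - 1) (fun j => j + 1) <;>
      simp +contextual [Finset.mem_Icc] <;> omega
  have htop : ∑ j ∈ Finset.Icc 3 (N-1), |u j - u (j-1)| + |u N - u (N-1)|
      = ∑ j ∈ Finset.Icc 3 N, |u j - u (j-1)| := by
    obtain ⟨M, rfl⟩ : ∃ M, N = M + 1 := ⟨N-1, by omega⟩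
    simp only [Nat.add_sub_cancel]
    exact (Finset.sum_Icc_succ_top (by omega) _).symm
  have hins3 : ∑ j ∈ Finset.Icc 3 N, |u j - u (j-1)|
      = |u 3 - u 2| + ∑ j ∈ Finset.Icc 4 N, |u j - u (j-1)| := by
    have h : Finset.Icc 3 N = insert 3 (Finset.Icc 4 N) := by
      ext x; simp [Finset.mem_Icc]; omega
    rw [h, Finset.sum_insert (by simp [Finset.mem_Icc])]
  -- split the sums
  have hIcc : Finset.Icc 1 N = insert 1 (insert 2 (insert 3 (Finset.Icc 4 N))) := by
    ext x; simp [Finset.mem_Icc]; omega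
  have h1n : (1:ℕ) ∉ insert 2 (insert 3 (Finset.Icc 4 N)) := by
    simp [Finset.mem_Icc]
  have h2n : (2:ℕ) ∉ insert 3 (Finset.Icc 4 N) := by
    simp [Finset.mem_Icc]
  have h3n : (3:ℕ) ∉ Finset.Icc 4 N := by
    simp [Finset.mem_Icc]
  have hsplitv : ∑ j ∈ Finset.Icc 1 N, |v j - v (j-1)|
      = |v 1 - v 0| + (|v 2 - v 1| + (|v 3 - v 2| + ∑ j ∈ Finset.Icc 4 N, |v j - v (j-1)|)) := by
    rw [hIcc, Finset.sum_insert h1n, Finset.sum_insert h2n, Finset.sum_insert h3n]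
  have hsplitu : ∑ j ∈ Finset.Icc 1 N, |u j - u (j-1)|
      = |u 1 - u 0| + (|u 2 - u 1| + (|u 3 - u 2| + ∑ j ∈ Finset.Icc 4 N, |u j - u (j-1)|)) := by
    rw [hIcc, Finset.sum_insert h1n, Finset.sum_insert h2n, Finset.sum_insert h3n]
  rw [hsplitv, hsplitu, hu0, hv0]
  have hkey := hint
  rw [hdist, hre] at hkey
  have hT : ∑ j ∈ Finset.Icc 3 (N-1), |u j - u (j-1)|
      = |u 3 - u 2| + ∑ j ∈ Finset.Icc 4 N, |u j - u (j-1)| - |u N - u (N-1)| := by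
    linarith [htop, hins3]
  rw [hT] at hkey
  linarith [h123, hkey]
end

section
/- Let α > 0 and γ_M, γ_A, λ be real numbers with γ_M ≥ 0, and set D = α + αγ_M + γ_M. If u^n and u^{n+1} satisfy the two coupled scheme equations of the stabilized P^0 cut DG scheme on the cut element and its neighbour (the equations for u_1 and u_2), then u_2^{n+1} − u_1^{n+1} = (1 − λ (α + αγ_A + γ_A)/D)(u_2^n − u_1^n) + (λ/D)(u_1^n − u_N^n). -/
/-- Identity for `u_2^{n+1} - u_1^{n+1}` in the stabilized `P⁰` cut DG scheme:
`u` is the solution at time level `n`, `v` at time level `n+1`. -/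
theorem stmt_1
    (N : ℕ)
    (α γM γA lam : ℝ)
    (hα0 : 0 < α) (hγM : 0 ≤ γM)
    (D : ℝ) (hD : D = α + α * γM + γM)
    (u v : ℕ → ℝ)
    (h1 : α * v 1 + γM * (v 1 - v 2)
        = α * u 1 + γM * (u 1 - u 2) + lam * (u N - u 1) + lam * γA * (u 2 - u 1))
    (h2 : v 2 + γM * (v 2 - v 1)
        = u 2 + γM * (u 2 - u 1) + lam * (u 1 - u 2) - lam * γA * (u 2 - u 1)) :
    v 2 - v 1 = (1 - lam * (α + α * γA + γA) / D) * (u 2 - u 1)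
        + (lam / D) * (u 1 - u N) := by
  have hD0 : D ≠ 0 := by nlinarith
  field_simp
  linear_combination α * h2 - h1 + (v 2 - v 1 - u 2 + u 1) * hD
end

section
/- Let α > 0 and γ_M, γ_A, λ be real numbers with γ_M ≥ 0, and set D = α + αγ_M + γ_M. If u^n and u^{n+1} satisfy the stabilized P^0 cut DG scheme equations (for u_1, u_2 and the standard update for u_3), then u_3^{n+1} − u_2^{n+1} = λ ((α + γ_M + αγ_A)/D)(u_2^n − u_1^n) + (1 − λ)(u_3^n − u_2^n) + (λ γ_M/D)(u_1^n − u_N^n). -/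
/-- Identity for `u_3^{n+1} - u_2^{n+1}` in the stabilized `P⁰` cut DG scheme:
`u` is the solution at time level `n`, `v` at time level `n+1`. -/
theorem stmt_2
    (N : ℕ) (hN : 3 ≤ N)
    (α γM γA lam : ℝ)
    (hα0 : 0 < α) (hγM : 0 ≤ γM)
    (D : ℝ) (hD : D = α + α * γM + γM)
    (u v : ℕ → ℝ)
    (h1 : α * v 1 + γM * (v 1 - v 2)
        = α * u 1 + γM * (u 1 - u 2) + lam * (u N - u 1) + lam * γA * (u 2 - u 1))
    (h2 : v 2 + γM * (v 2 - v 1)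
        = u 2 + γM * (u 2 - u 1) + lam * (u 1 - u 2) - lam * γA * (u 2 - u 1))
    (h3 : ∀ j, 3 ≤ j → j ≤ N → v j = u j + lam * (u (j - 1) - u j)) :
    v 3 - v 2 = lam * ((α + γM + α * γA) / D) * (u 2 - u 1)
        + (1 - lam) * (u 3 - u 2) + (lam * γM / D) * (u 1 - u N) := by
  subst hD
  have hD0 : α + α * γM + γM ≠ 0 := by positivity
  have h4 : v 3 = u 3 + lam * (u 2 - u 3) := by simpa using h3 3 le_rfl hN
  field_simp
  linear_combination (α + α * γM + γM) * h4 - (α + γM) * h2 - γM * h1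
end

section
/- Let α > 0 and γ_M, γ_A, λ be real numbers with γ_M ≥ 0, and set D = α + αγ_M + γ_M. If u^n and u^{n+1} satisfy the stabilized P^0 cut DG scheme equations (for u_1, u_2 and the standard update for u_N, with N ≥ 3), then u_1^{n+1} − u_N^{n+1} = (λ (γ_A − γ_M)/D)(u_2^n − u_1^n) + (1 − λ (γ_M + 1)/D)(u_1^n − u_N^n) − λ (u_{N−1}^n − u_N^n). -/
/-- Identity for `u_1^{n+1} - u_N^{n+1}` in the stabilized `P⁰` cut DG scheme:
`u` is the solution at time level `n`, `v` at time level `n+1`. -/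
theorem stmt_3
    (N : ℕ) (hN : 3 ≤ N)
    (α γM γA lam : ℝ)
    (hα0 : 0 < α) (hγM : 0 ≤ γM)
    (D : ℝ) (hD : D = α + α * γM + γM)
    (u v : ℕ → ℝ)
    (h1 : α * v 1 + γM * (v 1 - v 2)
        = α * u 1 + γM * (u 1 - u 2) + lam * (u N - u 1) + lam * γA * (u 2 - u 1))
    (h2 : v 2 + γM * (v 2 - v 1)
        = u 2 + γM * (u 2 - u 1) + lam * (u 1 - u 2) - lam * γA * (u 2 - u 1))
    (h3 : ∀ j, 3 ≤ j → j ≤ N → v j = u j + lam * (u (j - 1) - u j)) :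
    v 1 - v N = (lam * (γA - γM) / D) * (u 2 - u 1)
        + (1 - lam * (γM + 1) / D) * (u 1 - u N)
        - lam * (u (N - 1) - u N) := by
  have hD0 : D ≠ 0 := by
    rw [hD]; positivity
  have hvN : v N = u N + lam * (u (N - 1) - u N) := h3 N hN le_rfl
  subst hD
  field_simp
  linear_combination (1 + γM) * h1 + γM * h2 - (α + α * γM + γM) * hvN
end

section
/- The stabilized P^0 cut DG scheme with explicit Euler time stepping is globally conservative: for any α > 0, γ_M, γ_A, λ ∈ ℝ, N ≥ 3, if u^{n+1} satisfies the scheme equations given u^n, then α u_1^{n+1} + ∑_{j=2}^N u_j^{n+1} = α u_1^n + ∑_{j=2}^N u_j^n. -/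
lemma tele (u : ℕ → ℝ) : ∀ N, 3 ≤ N →
    ∑ j ∈ Finset.Icc 3 N, (u (j - 1) - u j) = u 2 - u N := by
  intro N hN
  induction N with
  | zero => omega
  | succ n ih =>
    rcases Nat.lt_or_ge n 3 with h | h
    · interval_cases n
      · omega
      · omega
      · simp [Finset.Icc_self]
    · rw [Finset.sum_Icc_succ_top (by omega), ih h]
      simp

/-- Global conservation of the stabilized `P⁰` cut DG scheme with explicit
Euler time stepping: the weighted sum `α u₁ + ∑_{j=2}^N u_j` is preserved. -/
theorem stmt_7
    (N : ℕ) (hN : 3 ≤ N)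
    (α γM γA lam : ℝ) (hα : 0 < α)
    (u v : ℕ → ℝ)
    (h1 : α * v 1 + γM * (v 1 - v 2)
        = α * u 1 + γM * (u 1 - u 2) + lam * (u N - u 1) + lam * γA * (u 2 - u 1))
    (h2 : v 2 + γM * (v 2 - v 1)
        = u 2 + γM * (u 2 - u 1) + lam * (u 1 - u 2) - lam * γA * (u 2 - u 1))
    (h3 : ∀ j, 3 ≤ j → j ≤ N → v j = u j + lam * (u (j - 1) - u j)) :
    α * v 1 + ∑ j ∈ Finset.Icc 2 N, v j = α * u 1 + ∑ j ∈ Finset.Icc 2 N, u j := by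
  have hsplit : ∀ w : ℕ → ℝ, ∑ j ∈ Finset.Icc 2 N, w j
      = w 2 + ∑ j ∈ Finset.Icc 3 N, w j := by
    intro w
    rw [show Finset.Icc 3 N = Finset.Ioc 2 N from Finset.Icc_add_one_left_eq_Ioc 2 N,
      Finset.Icc_eq_cons_Ioc (by omega), Finset.sum_cons]
  have hs : ∑ j ∈ Finset.Icc 3 N, v j
      = ∑ j ∈ Finset.Icc 3 N, u j + lam * (u 2 - u N) := by
    rw [← tele u N hN, Finset.mul_sum, ← Finset.sum_add_distrib]
    exact Finset.sum_congr rfl fun j hj => by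
      rw [Finset.mem_Icc] at hj; exact h3 j hj.1 hj.2
  rw [hsplit v, hsplit u]
  have := h1
  have := h2
  linarith
end

section
/- Let f : ℝ → ℝ be continuous and let F̃(u) = ∫_0^u f(s) ds be an antiderivative of f. Let f̂ : ℝ × ℝ → ℝ be a numerical flux that is consistent (f̂(u, u) = f(u) for all u), nondecreasing in its first argument, and nonincreasing in its second argument. Then for all real numbers a and b, F̃(b) − F̃(a) − f̂(a, b)·(b − a) ≥ 0; that is, the interface entropy contribution Θ = −F̃(u⁻) + f̂(u⁻, u⁺)·u⁻ + F̃(u⁺) − f̂(u⁻, u⁺)·u⁺ is nonnegative for any left and right trace values u⁻ = a, u⁺ = b. -/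
/-- Nonnegativity of the interface entropy contribution `Θ` for a consistent
monotone numerical flux `f̂`: for all trace values `a = u⁻`, `b = u⁺`,
`F̃(b) − F̃(a) − f̂(a,b)(b − a) ≥ 0`, where `F̃(u) = ∫₀ᵘ f(s) ds`. -/
theorem stmt_8
    (f : ℝ → ℝ) (hf : Continuous f)
    (fhat : ℝ → ℝ → ℝ)
    (hcons : ∀ u : ℝ, fhat u u = f u)
    (hmono : ∀ b : ℝ, Monotone fun a => fhat a b)
    (hanti : ∀ a : ℝ, Antitone fun b => fhat a b) :
    ∀ a b : ℝ,
      0 ≤ (∫ s in (0 : ℝ)..b, f s) - (∫ s in (0 : ℝ)..a, f s) - fhat a b * (b - a) := by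
  intro a b
  have hint : (∫ s in (0:ℝ)..b, f s) - (∫ s in (0:ℝ)..a, f s) = ∫ s in a..b, f s := by
    rw [← intervalIntegral.integral_add_adjacent_intervals
      (a := (0:ℝ)) (b := a) (c := b)
      (hf.intervalIntegrable 0 a) (hf.intervalIntegrable a b)]
    ring
  rw [hint]
  rcases le_total a b with hab | hab
  · have hle : ∀ s ∈ Set.Icc a b, fhat a b ≤ f s := by
      intro s hs
      calc fhat a b ≤ fhat a s := hanti a hs.2
        _ ≤ fhat s s := hmono s hs.1
        _ = f s := hcons s
    have := intervalIntegral.integral_mono_on hab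
      (intervalIntegrable_const : IntervalIntegrable (fun _ => fhat a b) MeasureTheory.volume a b)
      (hf.intervalIntegrable a b) hle
    rw [intervalIntegral.integral_const] at this
    rw [smul_eq_mul] at this; nlinarith [this]
  · have hle : ∀ s ∈ Set.Icc b a, f s ≤ fhat a b := by
      intro s hs
      calc f s = fhat s s := (hcons s).symm
        _ ≤ fhat a s := hmono s hs.2
        _ ≤ fhat a b := hanti a hs.1
    have := intervalIntegral.integral_mono_on hab
      (hf.intervalIntegrable b a)
      (intervalIntegrable_const : IntervalIntegrable (fun _ => fhat a b) MeasureTheory.volume b a) hle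
    rw [intervalIntegral.integral_const, intervalIntegral.integral_symm] at this
    rw [smul_eq_mul] at this; nlinarith [this]
end
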